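/- Let A ⊆ ℝ^D be convex and M strongly monotone with constant ν > 0, and let ε > 0 and ε' > 0. Suppose (a_ε, λ_ε) solves VI(W_ε, A × ℝ^n_+) and (a_{ε'}, λ_{ε'}) solves VI(W_{ε'}, A × ℝ^n_+). Then ν‖a_ε − a_{ε'}‖² + ε‖λ_ε − λ_{ε'}‖² ≤ (ε' − ε)⟨λ_{ε'}, λ_ε − λ_{ε'}⟩; consequently ‖λ_ε − λ_{ε'}‖ ≤ |ε − ε'|·‖λ_{ε'}‖/ε and ν‖a_ε − a_{ε'}‖² ≤ (ε − ε')²·‖λ_{ε'}‖²/ε. -/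

import Mathlib

open scoped RealInnerProductSpace

/-- Matrix-vector multiplication, viewed as a map between Euclidean spaces. -/
noncomputable def mulVecE {n D : ℕ} (K : Matrix (Fin n) (Fin D) ℝ)
    (x : EuclideanSpace ℝ (Fin D)) : EuclideanSpace ℝ (Fin n) :=
  (WithLp.equiv 2 _).symm (K.mulVec ((WithLp.equiv 2 _) x))

private lemma key_swap {n D : ℕ} (K : Matrix (Fin n) (Fin D) ℝ) (x : EuclideanSpace ℝ (Fin n))
    (y : EuclideanSpace ℝ (Fin D)) :
    ⟪mulVecE K.transpose x, y⟫ = ⟪x, mulVecE K y⟫ := by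
  simp only [mulVecE, PiLp.inner_apply, RCLike.inner_apply, conj_trivial,
    WithLp.equiv_symm_apply, WithLp.equiv_apply, PiLp.toLp_apply, Matrix.mulVec, dotProduct, Matrix.transpose_apply,
    Finset.sum_mul, Finset.mul_sum]
  rw [Finset.sum_comm]
  congr 1; ext i; congr 1; ext j; ring

/-- comparison between the solutions of two regularized variational
inequalities `VI(W_ε, A × ℝⁿ₊)` and `VI(W_ε', A × ℝⁿ₊)`. -/
theorem stmt_8 (D n : ℕ)
    (A : Set (EuclideanSpace ℝ (Fin D))) (hAconv : Convex ℝ A)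
    (K : Matrix (Fin n) (Fin D) ℝ) (l : EuclideanSpace ℝ (Fin n))
    (M : EuclideanSpace ℝ (Fin D) → EuclideanSpace ℝ (Fin D))
    (ν : ℝ) (hν : 0 < ν)
    (hmono : ∀ a₁ a₂ : EuclideanSpace ℝ (Fin D), ν * ‖a₁ - a₂‖ ^ 2 ≤ ⟪M a₁ - M a₂, a₁ - a₂⟫)
    (ε ε' : ℝ) (hε : 0 < ε) (hε' : 0 < ε')
    (aε aε' : EuclideanSpace ℝ (Fin D)) (lε lε' : EuclideanSpace ℝ (Fin n))
    (haεA : aε ∈ A) (hlε : ∀ j, 0 ≤ lε j)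
    (haε'A : aε' ∈ A) (hlε' : ∀ j, 0 ≤ lε' j)
    (hVIε : ∀ a ∈ A, ∀ lam : EuclideanSpace ℝ (Fin n), (∀ j, 0 ≤ lam j) →
      0 ≤ ⟪M aε + mulVecE K.transpose lε, a - aε⟫
          + ⟪l - mulVecE K aε + ε • lε, lam - lε⟫)
    (hVIε' : ∀ a ∈ A, ∀ lam : EuclideanSpace ℝ (Fin n), (∀ j, 0 ≤ lam j) →
      0 ≤ ⟪M aε' + mulVecE K.transpose lε', a - aε'⟫
          + ⟪l - mulVecE K aε' + ε' • lε', lam - lε'⟫) :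
    ν * ‖aε - aε'‖ ^ 2 + ε * ‖lε - lε'‖ ^ 2 ≤ (ε' - ε) * ⟪lε', lε - lε'⟫ ∧
    ‖lε - lε'‖ ≤ |ε - ε'| * ‖lε'‖ / ε ∧
    ν * ‖aε - aε'‖ ^ 2 ≤ (ε - ε') ^ 2 * ‖lε'‖ ^ 2 / ε := by
  have h1 := hVIε aε' haε'A lε' hlε'
  have h2 := hVIε' aε haεA lε hlε
  have hm := hmono aε aε'
  rw [inner_add_left, inner_add_left, key_swap] at h1 h2
  have hmain : ν * ‖aε - aε'‖ ^ 2 + ε * ‖lε - lε'‖ ^ 2 ≤ (ε' - ε) * ⟪lε', lε - lε'⟫ := by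
    have hn : ε * ‖lε - lε'‖ ^ 2 = ε * ⟪lε - lε', lε - lε'⟫ := by
      rw [real_inner_self_eq_norm_sq]
    rw [hn]
    have c1 : ⟪lε, mulVecE K (aε' - aε)⟫ = -⟪mulVecE K (aε - aε'), lε⟫ := by
      have : mulVecE K (aε' - aε) = -(mulVecE K (aε - aε')) := by
        simp [mulVecE, Matrix.mulVec_sub]
      rw [this, inner_neg_right, real_inner_comm]
    have c2 : ⟪lε', mulVecE K (aε - aε')⟫ = ⟪mulVecE K (aε - aε'), lε'⟫ := real_inner_comm _ _
    rw [c1] at h1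
    rw [c2] at h2
    simp only [inner_sub_right, inner_add_left, inner_sub_left, real_inner_smul_left,
      inner_neg_left] at h1 h2 hm ⊢
    have rc1 : ⟪lε', lε⟫ = ⟪lε, lε'⟫ := real_inner_comm _ _
    have rc2 : ⟪aε', aε⟫ = ⟪aε, aε'⟫ := real_inner_comm _ _
    have d1 : ⟪mulVecE K (aε - aε'), lε⟫ = ⟪mulVecE K aε, lε⟫ - ⟪mulVecE K aε', lε⟫ := by
      rw [show mulVecE K (aε - aε') = mulVecE K aε - mulVecE K aε' from by
        simp [mulVecE, Matrix.mulVec_sub], inner_sub_left]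
    have d2 : ⟪mulVecE K (aε - aε'), lε'⟫ = ⟪mulVecE K aε, lε'⟫ - ⟪mulVecE K aε', lε'⟫ := by
      rw [show mulVecE K (aε - aε') = mulVecE K aε - mulVecE K aε' from by
        simp [mulVecE, Matrix.mulVec_sub], inner_sub_left]
    have e1 : ⟪mulVecE K aε, lε⟫ = ⟪lε, mulVecE K aε⟫ := real_inner_comm _ _
    have e2 : ⟪mulVecE K aε', lε'⟫ = ⟪lε', mulVecE K aε'⟫ := real_inner_comm _ _
    have e3 : ⟪mulVecE K aε, lε'⟫ = ⟪lε', mulVecE K aε⟫ := real_inner_comm _ _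
    have e4 : ⟪mulVecE K aε', lε⟫ = ⟪lε, mulVecE K aε'⟫ := real_inner_comm _ _
    rw [d1] at h1
    rw [d2] at h2
    rw [e1, e4] at h1
    rw [e2, e3] at h2
    nlinarith [h1, h2, hm, rc1, rc2]
  have hC : 0 ≤ |ε - ε'| * ‖lε'‖ := by positivity
  have hb : (ε' - ε) * ⟪lε', lε - lε'⟫ ≤ |ε - ε'| * ‖lε'‖ * ‖lε - lε'‖ := by
    calc (ε' - ε) * ⟪lε', lε - lε'⟫ ≤ |(ε' - ε) * ⟪lε', lε - lε'⟫| := le_abs_self _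
      _ = |ε - ε'| * |⟪lε', lε - lε'⟫| := by rw [abs_mul, abs_sub_comm]
      _ ≤ |ε - ε'| * (‖lε'‖ * ‖lε - lε'‖) := by
          gcongr
          exact abs_real_inner_le_norm _ _
      _ = |ε - ε'| * ‖lε'‖ * ‖lε - lε'‖ := by ring
  have hνa : 0 ≤ ν * ‖aε - aε'‖ ^ 2 := mul_nonneg hν.le (sq_nonneg _)
  have hlam : ‖lε - lε'‖ ≤ |ε - ε'| * ‖lε'‖ / ε := by
    rw [le_div_iff₀ hε]
    rcases eq_or_lt_of_le (norm_nonneg (lε - lε')) with h0 | h0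
    · rw [← h0, zero_mul]; exact hC
    · nlinarith [hmain, hb, hνa, h0]
  refine ⟨hmain, hlam, ?_⟩
  rw [le_div_iff₀ hε]
  have habs : (|ε - ε'| * ‖lε'‖) ^ 2 = (ε - ε') ^ 2 * ‖lε'‖ ^ 2 := by
    rw [mul_pow, sq_abs]
  nlinarith [hmain, hb, hε.le, sq_nonneg (|ε - ε'| * ‖lε'‖ - ε * ‖lε - lε'‖), habs,
    mul_nonneg hε.le (sq_nonneg ‖lε - lε'‖), hC]
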